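/- Suppose $\beta_n\in(0,1)$ for all $n$, $(\beta_n)\in\mathcal{GS}(-\beta)$ with $\beta\in(1/2,1]$, and $\xi=\lim_{n\to\infty}(n\beta_n)^{-1}$ exists and is finite. Then with $Q_n=\prod_{j=1}^n(1-\beta_j)$ and any $m>0$ with $m>0$ (taking $v_n\equiv 1$, $v^*=0$), $\lim_{n\to\infty} Q_n^m\sum_{k=1}^n Q_k^{-m}\beta_k = \frac{1}{m}$; in particular $Q_n\to 0$. -/

import Mathlib

open Filter Finset Real

def GS (γ : ℝ) (v : ℕ → ℝ) : Prop :=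
  (∀ n, 0 < v n) ∧
    Tendsto (fun n : ℕ => (n : ℝ) * (1 - v (n - 1) / v n)) atTop (nhds γ)

/-!
Put `R n = Q n ^ (-m)`. Then `R n - R (n - 1) = R n * β n * g (β n)` with
`g x = (1 - (1 - x) ^ m) / x → m` as `x → 0`, and `β n → 0` because `β ∈ GS(-b)` with `b > 0`.
Since `n * β n` stays bounded below, `∑ β` diverges, so `Q n → 0` and `R n → ∞`. Summing the
asymptotic equivalence `R n - R (n - 1) ~ m * R n * β n` (Stolz–Cesàro) gives
`m * ∑_{k ≤ n} R k * β k ~ R n`, i.e. `Q n ^ m * ∑_{k ≤ n} Q k ^ (-m) * β k → 1 / m`.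
-/

open Asymptotics Topology

@[to_additive sum_Icc_one_eq_sum_range]
theorem Finset.prod_Icc_one_eq_prod_range {M : Type*} [CommMonoid M] (f : ℕ → M) (n : ℕ) :
    ∏ j ∈ Icc 1 n, f j = ∏ i ∈ range n, f (i + 1) := by
  induction n with
  | zero => simp
  | succ n ih => rw [prod_Icc_succ_top (by omega), ih, prod_range_succ]

theorem Asymptotics.IsEquivalent.sum_range {u v : ℕ → ℝ} (h : u ~[atTop] v) (hv : 0 ≤ v)
    (hsum : Tendsto (fun n => ∑ i ∈ range n, v i) atTop atTop) :
    (fun n => ∑ i ∈ range n, u i) ~[atTop] fun n => ∑ i ∈ range n, v i := by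
  refine IsLittleO.isEquivalent ((h.isLittleO.sum_range hv hsum).congr_left fun n => ?_)
  simp [sum_sub_distrib]

theorem isEquivalent_sum_range_of_isEquivalent_sub {a R : ℕ → ℝ}
    (h : a ~[atTop] fun n => R (n + 1) - R n) (hmono : Monotone R)
    (hR : Tendsto R atTop atTop) : (fun n => ∑ i ∈ range n, a i) ~[atTop] R := by
  have htel : ∀ n, ∑ i ∈ range n, (R (i + 1) - R i) = R n + -R 0 := fun n => by
    rw [sum_range_sub, sub_eq_add_neg]
  have hsub : (fun n => R n + -R 0) ~[atTop] R :=
    IsEquivalent.refl.add_const_of_norm_tendsto_atTop (tendsto_norm_atTop_atTop.comp hR)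
  refine (h.sum_range (fun n => sub_nonneg.2 (hmono n.le_succ)) ?_).congr_right
    (Eventually.of_forall htel) |>.trans hsub
  simpa only [htel] using tendsto_atTop_add_const_right _ (-R 0) hR

theorem tendsto_zero_of_mul_one_add_le {u c : ℕ → ℝ} (hu : ∀ n, 0 ≤ u n) (hc : ∀ n, 0 ≤ c n)
    (hsum : ¬Summable c) (hrec : ∀ᶠ n in atTop, u (n + 1) * (1 + c (n + 1)) ≤ u n) :
    Tendsto u atTop (𝓝 0) := by
  set S : ℕ → ℝ := fun n => ∑ i ∈ range n, c i
  have hS : Tendsto S atTop atTop := (not_summable_iff_tendsto_nat_atTop_of_nonneg hc).1 hsum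
  have hS0 : ∀ n, 0 ≤ S n := fun n => sum_nonneg fun i _ => hc i
  obtain ⟨N, hN⟩ := eventually_atTop.1 hrec
  -- `u n * (1 + S (n + 1))` is antitone from `N` on, since `(1 + c) * (1 + S) ≥ 1 + S + c`.
  have hbound : ∀ n, N ≤ n → u n * (1 + S (n + 1)) ≤ u N * (1 + S (N + 1)) := by
    intro n hn
    induction n, hn using Nat.le_induction with
    | base => rfl
    | succ n hn ih =>
      have hstep : S (n + 2) = S (n + 1) + c (n + 1) := sum_range_succ c (n + 1)
      calc u (n + 1) * (1 + S (n + 2))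
          ≤ u (n + 1) * (1 + c (n + 1)) * (1 + S (n + 1)) := by
            rw [hstep]
            nlinarith [mul_nonneg (mul_nonneg (hu (n + 1)) (hc (n + 1))) (hS0 (n + 1))]
        _ ≤ u n * (1 + S (n + 1)) :=
            mul_le_mul_of_nonneg_right (hN n hn) (by linarith [hS0 (n + 1)])
        _ ≤ u N * (1 + S (N + 1)) := ih
  have hlim : Tendsto (fun n => u N * (1 + S (N + 1)) / (1 + S (n + 1))) atTop (𝓝 0) :=
    tendsto_const_nhds.div_atTop
      (tendsto_atTop_add_const_left _ 1 (hS.comp (tendsto_add_atTop_nat 1)))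
  refine squeeze_zero' (Eventually.of_forall hu) ?_ hlim
  filter_upwards [eventually_ge_atTop N] with n hn
  rw [le_div_iff₀ (by linarith [hS0 (n + 1)])]
  exact hbound n hn

theorem GS.tendsto_zero {γ : ℝ} {v : ℕ → ℝ} (hv : GS γ v) (hγ : γ < 0) :
    Tendsto v atTop (𝓝 0) := by
  set c : ℕ → ℝ := fun n => -γ / 2 * (n : ℝ)⁻¹
  have hc : ¬Summable c := by
    rw [summable_mul_left_iff (by linarith)]
    exact Real.not_summable_natCast_inv
  refine tendsto_zero_of_mul_one_add_le (fun n => (hv.1 n).le)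
    (fun n => mul_nonneg (by linarith) (by positivity)) hc ?_
  filter_upwards [(tendsto_add_atTop_nat 1).eventually
    (hv.2.eventually (eventually_lt_nhds (by linarith : γ < γ / 2)))] with n hn
  have hpos := hv.1 (n + 1)
  have hk : (0 : ℝ) < (n + 1 : ℕ) := by positivity
  simp only [Nat.add_sub_cancel] at hn ⊢
  have hratio : 1 + -γ / 2 * ((n + 1 : ℕ) : ℝ)⁻¹ ≤ v n / v (n + 1) := by
    have : -γ / 2 * ((n + 1 : ℕ) : ℝ)⁻¹ ≤ v n / v (n + 1) - 1 := by
      rw [← div_eq_mul_inv, div_le_iff₀ hk]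
      linarith
    linarith
  calc v (n + 1) * (1 + -γ / 2 * ((n + 1 : ℕ) : ℝ)⁻¹) ≤ v (n + 1) * (v n / v (n + 1)) := by
        gcongr
    _ = v n := mul_div_cancel₀ _ hpos.ne'

theorem not_summable_of_tendsto_inv_natCast_mul {u : ℕ → ℝ} (hu : ∀ n, u n ≠ 0) {ξ : ℝ}
    (h : Tendsto (fun n : ℕ => ((n : ℝ) * u n)⁻¹) atTop (𝓝 ξ)) : ¬Summable u := by
  intro hsum
  have hO : (fun n : ℕ => (n : ℝ)⁻¹) =O[atTop] u :=
    ((h.isBigO_one ℝ).mul (isBigO_refl u atTop)).congr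
      (fun n => by rw [mul_inv, inv_mul_cancel_right₀ (hu n)]) fun n => one_mul _
  exact Real.not_summable_natCast_inv (summable_of_isBigO_nat hsum hO)

theorem tendsto_prod_one_sub_zero {c : ℕ → ℝ} (hc0 : ∀ n, 0 ≤ c n) (hc1 : ∀ n, c n ≤ 1)
    (hc : ¬Summable c) : Tendsto (fun n => ∏ i ∈ range n, (1 - c i)) atTop (𝓝 0) := by
  have hS := (not_summable_iff_tendsto_nat_atTop_of_nonneg hc0).1 hc
  refine squeeze_zero (fun n => prod_nonneg fun i _ => sub_nonneg.2 (hc1 i)) (fun n => ?_)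
    (tendsto_exp_atBot.comp (tendsto_neg_atTop_atBot.comp hS))
  simp only [Function.comp_apply]
  rw [← sum_neg_distrib, exp_sum]
  exact prod_le_prod (fun i _ => sub_nonneg.2 (hc1 i)) fun i _ => one_sub_le_exp_neg (c i)

theorem tendsto_one_sub_one_sub_rpow_div (m : ℝ) :
    Tendsto (fun x => (1 - (1 - x) ^ m) / x) (𝓝[≠] 0) (𝓝 m) := by
  have hd : HasDerivAt (fun x : ℝ => 1 - (1 - x) ^ m) m 0 := by
    simpa using (((hasDerivAt_id (0 : ℝ)).const_sub 1).rpow_const (p := m) (by simp)).const_sub 1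
  refine (hasDerivAt_iff_tendsto_slope.1 hd).congr fun x => ?_
  simp [slope_def_field]

theorem tendsto_prod_one_sub_rpow_mul_sum {q P : ℕ → ℝ} (hq : ∀ n, q n ∈ Set.Ioo 0 1)
    (hq0 : Tendsto q atTop (𝓝 0)) (hsum : ¬Summable q) (hP : ∀ n, P n = ∏ i ∈ range n, (1 - q i))
    {m : ℝ} (hm : 0 < m) :
    Tendsto (fun n => P n ^ m * ∑ i ∈ range n, P (i + 1) ^ (-m) * q i) atTop (𝓝 (1 / m)) := by
  have hq1 : ∀ n, 0 < 1 - q n := fun n => sub_pos.2 (hq n).2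
  have hPpos : ∀ n, 0 < P n := fun n => (hP n).symm ▸ prod_pos fun i _ => hq1 i
  have hPsucc : ∀ n, P (n + 1) = P n * (1 - q n) := fun n => by rw [hP, hP, prod_range_succ]
  set R : ℕ → ℝ := fun n => P n ^ (-m)
  have hR : Tendsto R atTop atTop := by
    refine (tendsto_rpow_neg_nhdsGT_zero (neg_neg_of_pos hm)).comp
      (tendsto_nhdsWithin_iff.2 ⟨?_, Eventually.of_forall hPpos⟩)
    simpa only [← funext hP] using tendsto_prod_one_sub_zero (fun n => (hq n).1.le)
      (fun n => (hq n).2.le) hsum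
  have hincr : ∀ n, R (n + 1) - R n = R (n + 1) * q n * ((1 - (1 - q n) ^ m) / q n) := by
    intro n
    have hRn : R n = R (n + 1) * (1 - q n) ^ m := by
      simp only [R, hPsucc, mul_rpow (hPpos n).le (hq1 n).le, rpow_neg (hq1 n).le, mul_assoc,
        inv_mul_cancel₀ (rpow_pos_of_pos (hq1 n) m).ne', mul_one]
    rw [hRn, mul_assoc, mul_div_cancel₀ _ (hq n).1.ne']
    ring
  have hslope : Tendsto (fun n => (1 - (1 - q n) ^ m) / q n) atTop (𝓝 m) :=
    (tendsto_one_sub_one_sub_rpow_div m).comp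
      (tendsto_nhdsWithin_iff.2 ⟨hq0, Eventually.of_forall fun n => (hq n).1.ne'⟩)
  have hequiv : (fun n => R (n + 1) - R n) ~[atTop] fun n => R (n + 1) * q n * m := by
    refine ((IsEquivalent.refl (u := fun n => R (n + 1) * q n)).mul
      ((isEquivalent_const_iff_tendsto hm.ne').2 hslope)).congr_left ?_
    exact Eventually.of_forall fun n => (hincr n).symm
  have hRmono : Monotone R := monotone_nat_of_le_succ fun n => by
    rw [← sub_nonneg, hincr]
    have hpow : (1 - q n) ^ m ≤ 1 := rpow_le_one (hq1 n).le (by linarith [(hq n).1]) hm.le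
    exact mul_nonneg (mul_nonneg (rpow_pos_of_pos (hPpos _) _).le (hq n).1.le)
      (div_nonneg (sub_nonneg.2 hpow) (hq n).1.le)
  have hsum_equiv : (fun n => m * ∑ i ∈ range n, R (i + 1) * q i) ~[atTop] R := by
    refine (isEquivalent_sum_range_of_isEquivalent_sub hequiv.symm hRmono hR).congr_left ?_
    exact Eventually.of_forall fun n => (sum_mul _ _ _).symm.trans (mul_comm _ _)
  refine ((isEquivalent_iff_tendsto_one (Eventually.of_forall fun n => ?_)).1 hsum_equiv
    |>.div_const m).congr fun n => ?_
  · exact (rpow_pos_of_pos (hPpos n) _).ne'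
  · simp only [Pi.div_apply, R, rpow_neg (hPpos _).le]
    field_simp

theorem lemma1_special_case (β : ℕ → ℝ) (b ξ m : ℝ)
    (hβ : GS (-b) β) (hb : b ∈ Set.Ioc (1/2 : ℝ) 1)
    (hβ01 : ∀ n, β n ∈ Set.Ioo (0 : ℝ) 1)
    (hξ : Tendsto (fun n : ℕ => ((n : ℝ) * β n)⁻¹) atTop (nhds ξ))
    (hm : 0 < m)
    (Q : ℕ → ℝ) (hQ : ∀ n, Q n = ∏ j ∈ Icc 1 n, (1 - β j)) :
    Tendsto (fun n : ℕ => Q n ^ m * ∑ k ∈ Icc 1 n, Q k ^ (-m) * β k)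
        atTop (nhds (1 / m)) ∧
      Tendsto Q atTop (nhds 0) := by
  set q : ℕ → ℝ := fun i => β (i + 1)
  have hq : ∀ n, q n ∈ Set.Ioo 0 1 := fun n => hβ01 (n + 1)
  have hq0 : Tendsto q atTop (𝓝 0) :=
    (hβ.tendsto_zero (by linarith [hb.1])).comp (tendsto_add_atTop_nat 1)
  have hqsum : ¬Summable q := (summable_nat_add_iff 1).not.2
    (not_summable_of_tendsto_inv_natCast_mul (fun n => (hβ01 n).1.ne') hξ)
  have hQq : ∀ n, Q n = ∏ i ∈ range n, (1 - q i) := fun n => by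
    rw [hQ, prod_Icc_one_eq_prod_range]
  refine ⟨?_, ?_⟩
  · simpa only [sum_Icc_one_eq_sum_range] using
      tendsto_prod_one_sub_rpow_mul_sum hq hq0 hqsum hQq hm
  · simpa only [← funext hQq] using
      tendsto_prod_one_sub_zero (fun n => (hq n).1.le) (fun n => (hq n).2.le) hqsum
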